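/- Let $d \geq 1$ be an integer, let $\alpha$ be a nonzero real number, and let $\varepsilon_1 \in (0, d)$ and $\varepsilon_2 > 0$. Let $u : (0, \infty) \to \mathbb{R}$ be a function such that the function $t \mapsto t^{d - \varepsilon_1}\,(u(t) - \alpha t^{-d})$, defined on $(0, \varepsilon_2]$, extends to a continuous function on $[0, \varepsilon_2]$. Let $\phi : \mathbb{R} \to \mathbb{R}$ be continuous with compact support contained in $(0, \infty)$, with $\phi \geq 0$ and $\phi(1) \neq 0$. Then there exist constants $c > 0$ and $\gamma_0 > 0$ such that for all $\gamma \in (0, \gamma_0]$, $\big| \int_0^{\infty} \tfrac{1}{\gamma}\, \phi(t/\gamma)\, u(t)\, dt \big| \geq c\, |\alpha|\, \gamma^{-d}$. -/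

import Mathlib

open Real MeasureTheory

set_option maxHeartbeats 1000000

/-- **Lower bound for the pairing of the wave trace with rescaled test functions.**
Suppose `u : (0,∞) → ℝ` satisfies `u t = α t^{-d} + O(t^{-(d-ε₁)})` as `t ↓ 0`,
in the sense that `t ↦ t^{d-ε₁} (u t - α t^{-d})` extends continuously to
`[0, ε₂]`, with `α ≠ 0`.  If `φ ≥ 0` is continuous with compact support in
`(0,∞)` and `φ 1 ≠ 0`, then there are `c > 0` and `γ₀ > 0` with
`|∫₀^∞ γ⁻¹ φ(t/γ) u(t) dt| ≥ c |α| γ^{-d}` for all `γ ∈ (0, γ₀]`. -/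
theorem stmt11
    (d : ℕ) (hd : 1 ≤ d) (α : ℝ) (hα : α ≠ 0)
    (ε₁ ε₂ : ℝ) (hε₁ : 0 < ε₁) (hε₁d : ε₁ < d) (hε₂ : 0 < ε₂)
    (u : ℝ → ℝ)
    (hu : ∃ v : ℝ → ℝ, ContinuousOn v (Set.Icc 0 ε₂) ∧
      ∀ t ∈ Set.Ioc (0 : ℝ) ε₂,
        v t = t ^ ((d : ℝ) - ε₁) * (u t - α * t ^ (-(d : ℝ))))
    (φ : ℝ → ℝ) (hφc : Continuous φ) (hφsupp : HasCompactSupport φ)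
    (hφpos : tsupport φ ⊆ Set.Ioi (0 : ℝ))
    (hφnn : ∀ t, 0 ≤ φ t) (hφ1 : φ 1 ≠ 0) :
    ∃ c > (0 : ℝ), ∃ γ₀ > (0 : ℝ), ∀ γ ∈ Set.Ioc (0 : ℝ) γ₀,
      c * |α| * γ ^ (-(d : ℝ)) ≤
        |∫ t in Set.Ioi (0 : ℝ), (1 / γ) * φ (t / γ) * u t| := by
  obtain ⟨v, hv, hvu⟩ := hu
  -- bounds on the support of φ
  have h1supp : (1 : ℝ) ∈ tsupport φ := subset_tsupport φ hφ1
  have hKc : IsCompact (tsupport φ) := hφsupp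
  have hKne : (tsupport φ).Nonempty := ⟨1, h1supp⟩
  set a := sInf (tsupport φ) with ha_def
  set b := sSup (tsupport φ) with hb_def
  have haK : a ∈ tsupport φ := hKc.sInf_mem hKne
  have hbK : b ∈ tsupport φ := hKc.sSup_mem hKne
  have ha0 : 0 < a := hφpos haK
  have hb0 : 0 < b := hφpos hbK
  have ha1 : a ≤ 1 := csInf_le hKc.bddBelow h1supp
  have h1b : (1 : ℝ) ≤ b := le_csSup hKc.bddAbove h1supp
  have hab : a ≤ b := ha1.trans h1b
  -- the truncation map m
  set m : ℝ → ℝ := fun x => max (min x b) a with hm_def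
  have hmc : Continuous m := (continuous_id.min continuous_const).max continuous_const
  have hma : ∀ x, a ≤ m x := fun x => le_max_right _ _
  have hm0 : ∀ x, 0 < m x := fun x => lt_of_lt_of_le ha0 (hma x)
  have hmb : ∀ x, m x ≤ b := fun x => max_le (min_le_right _ _) hab
  have hmK : ∀ x, φ x ≠ 0 → m x = x := by
    intro x hx
    have hxK : x ∈ tsupport φ := subset_tsupport φ hx
    have h1 : a ≤ x := csInf_le hKc.bddBelow hxK
    have h2 : x ≤ b := le_csSup hKc.bddAbove hxK
    simp [hm_def, min_eq_left h2, max_eq_left h1]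
  have hm1 : m 1 = 1 := by simp [hm_def, min_eq_left h1b, max_eq_left ha1]
  -- the two reference integrals
  set g₁ : ℝ → ℝ := fun x => φ x * m x ^ (-(d : ℝ)) with hg₁_def
  set g₂ : ℝ → ℝ := fun x => φ x * m x ^ (ε₁ - (d : ℝ)) with hg₂_def
  have hg₁c : Continuous g₁ :=
    hφc.mul (hmc.rpow_const fun x => Or.inl (hm0 x).ne')
  have hg₂c : Continuous g₂ :=
    hφc.mul (hmc.rpow_const fun x => Or.inl (hm0 x).ne')
  have hg₁supp : HasCompactSupport g₁ := hφsupp.mul_right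
  have hg₂supp : HasCompactSupport g₂ := hφsupp.mul_right
  set I := ∫ x, g₁ x with hI_def
  set J := ∫ x, g₂ x with hJ_def
  have hg₁nn : ∀ x, 0 ≤ g₁ x := fun x =>
    mul_nonneg (hφnn x) (Real.rpow_nonneg (hm0 x).le _)
  have hg₂nn : ∀ x, 0 ≤ g₂ x := fun x =>
    mul_nonneg (hφnn x) (Real.rpow_nonneg (hm0 x).le _)
  have hIpos : 0 < I := by
    refine hg₁c.integral_pos_of_hasCompactSupport_nonneg_nonzero hg₁supp hg₁nn (x := 1) ?_
    simp [hg₁_def, hm1, Real.one_rpow, hφ1]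
  have hJnn : 0 ≤ J := integral_nonneg hg₂nn
  -- bound on v
  obtain ⟨M₀, hM₀⟩ := (isCompact_Icc (a := (0:ℝ)) (b := ε₂)).exists_bound_of_continuousOn hv
  set M : ℝ := max M₀ 0 with hM_def
  have hMnn : 0 ≤ M := le_max_right _ _
  have hM : ∀ t ∈ Set.Icc (0:ℝ) ε₂, |v t| ≤ M := fun t ht =>
    (hM₀ t ht).trans (le_max_left _ _)
  -- choice of constants
  have hαpos : 0 < |α| := abs_pos.mpr hα
  set X : ℝ := I * |α| / (2 * (M * J + 1)) with hX_def
  have hMJ1 : 0 < M * J + 1 := by positivity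
  have hXpos : 0 < X := by positivity
  refine ⟨I / 2, by positivity, min (ε₂ / b) (X ^ (1 / ε₁)), ?_, ?_⟩
  · exact lt_min (by positivity) (Real.rpow_pos_of_pos hXpos _)
  intro γ hγ
  obtain ⟨hγ0, hγle⟩ := hγ
  have hγb : γ * b ≤ ε₂ := by
    have := hγle.trans (min_le_left _ _)
    calc γ * b ≤ ε₂ / b * b := by nlinarith
    _ = ε₂ := by field_simp
  have hγX : γ ^ ε₁ ≤ X := by
    calc γ ^ ε₁ ≤ (X ^ (1 / ε₁)) ^ ε₁ :=
          Real.rpow_le_rpow hγ0.le (hγle.trans (min_le_right _ _)) hε₁.le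
    _ = X := by
        rw [← Real.rpow_mul hXpos.le, one_div, inv_mul_cancel₀ hε₁.ne', Real.rpow_one]
  -- reduce to an integral over ℝ
  have hzero : ∀ t ∉ Set.Ioi (0:ℝ), (1 / γ) * φ (t / γ) * u t = 0 := by
    intro t ht
    have ht' : t ≤ 0 := not_lt.mp ht
    have h1 : t / γ ∉ tsupport φ := by
      intro hmem
      have h2 : (0:ℝ) < t / γ := hφpos hmem
      have h3 : t / γ ≤ 0 := div_nonpos_of_nonpos_of_nonneg ht' hγ0.le
      linarith
    rw [image_eq_zero_of_notMem_tsupport h1, mul_zero, zero_mul]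
  rw [setIntegral_eq_integral_of_forall_compl_eq_zero hzero]
  -- change of variables t = γ x
  have hcv : (∫ t, (1 / γ) * φ (t / γ) * u t) = ∫ x, φ x * u (γ * x) := by
    have h := MeasureTheory.Measure.integral_comp_mul_left
      (fun t => (1 / γ) * φ (t / γ) * u t) γ
    have heq : ∀ x : ℝ, (1 / γ) * φ ((γ * x) / γ) * u (γ * x)
        = (1 / γ) * (φ x * u (γ * x)) := by
      intro x
      rw [mul_div_cancel_left₀ x hγ0.ne', mul_assoc]
    simp_rw [heq] at h
    rw [MeasureTheory.integral_const_mul] at h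
    rw [abs_of_pos (inv_pos.mpr hγ0), smul_eq_mul, ← one_div] at h
    exact (mul_left_cancel₀ (by positivity : (1:ℝ)/γ ≠ 0) h).symm
  rw [hcv]
  -- rewrite the integrand using v
  have hG : ∀ x, φ x * u (γ * x)
      = φ x * (α * (γ * m x) ^ (-(d : ℝ)))
        + φ x * ((γ * m x) ^ (ε₁ - (d : ℝ)) * v (γ * m x)) := by
    intro x
    by_cases hx : φ x = 0
    · simp [hx]
    · have hmx : m x = x := hmK x hx
      have hx0 : 0 < x := by rw [← hmx]; exact hm0 x
      have hxb : x ≤ b := by rw [← hmx]; exact hmb x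
      have hT0 : 0 < γ * x := mul_pos hγ0 hx0
      have hTε : γ * x ≤ ε₂ := le_trans (mul_le_mul_of_nonneg_left hxb hγ0.le) hγb
      have hvt := hvu (γ * x) ⟨hT0, hTε⟩
      rw [hmx, hvt, ← mul_add]
      congr 1
      have hpow : (γ * x) ^ (ε₁ - (d : ℝ)) * (γ * x) ^ ((d : ℝ) - ε₁) = 1 := by
        rw [← Real.rpow_add hT0]; simp
      rw [← mul_assoc, hpow, one_mul]
      ring
  simp_rw [hG]
  -- the two pieces are integrable
  have hvcomp : Continuous fun x => v (γ * m x) := by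
    refine hv.comp_continuous (continuous_const.mul hmc) fun x => ?_
    exact ⟨(mul_pos hγ0 (hm0 x)).le, le_trans (mul_le_mul_of_nonneg_left (hmb x) hγ0.le) hγb⟩
  have hc1 : Continuous fun x => φ x * (α * (γ * m x) ^ (-(d : ℝ))) :=
    hφc.mul (continuous_const.mul
      ((continuous_const.mul hmc).rpow_const fun x => Or.inl (mul_pos hγ0 (hm0 x)).ne'))
  have hc2 : Continuous fun x => φ x * ((γ * m x) ^ (ε₁ - (d : ℝ)) * v (γ * m x)) :=
    hφc.mul (((continuous_const.mul hmc).rpow_const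
      fun x => Or.inl (mul_pos hγ0 (hm0 x)).ne').mul hvcomp)
  have hint1 : Integrable fun x => φ x * (α * (γ * m x) ^ (-(d : ℝ))) :=
    hc1.integrable_of_hasCompactSupport hφsupp.mul_right
  have hint2 : Integrable fun x => φ x * ((γ * m x) ^ (ε₁ - (d : ℝ)) * v (γ * m x)) :=
    hc2.integrable_of_hasCompactSupport hφsupp.mul_right
  rw [integral_add hint1 hint2]
  -- main term
  have hmain : (∫ x, φ x * (α * (γ * m x) ^ (-(d : ℝ)))) = α * γ ^ (-(d : ℝ)) * I := by
    have heq : ∀ x, φ x * (α * (γ * m x) ^ (-(d : ℝ)))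
        = (α * γ ^ (-(d : ℝ))) * g₁ x := by
      intro x
      rw [Real.mul_rpow hγ0.le (hm0 x).le]
      simp only [hg₁_def]; ring
    simp_rw [heq]
    rw [MeasureTheory.integral_const_mul]
  rw [hmain]
  -- remainder bound
  have hintB : Integrable fun x => (M * γ ^ (ε₁ - (d : ℝ))) * g₂ x :=
    (hg₂c.integrable_of_hasCompactSupport hg₂supp).const_mul _
  have hrem : |∫ x, φ x * ((γ * m x) ^ (ε₁ - (d : ℝ)) * v (γ * m x))|
      ≤ M * γ ^ (ε₁ - (d : ℝ)) * J := by
    have h1 : |∫ x, φ x * ((γ * m x) ^ (ε₁ - (d : ℝ)) * v (γ * m x))|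
        ≤ ∫ x, |φ x * ((γ * m x) ^ (ε₁ - (d : ℝ)) * v (γ * m x))| := by
      simpa only [Real.norm_eq_abs] using
        norm_integral_le_integral_norm (μ := volume)
          (fun x => φ x * ((γ * m x) ^ (ε₁ - (d : ℝ)) * v (γ * m x)))
    have h2 : (∫ x, |φ x * ((γ * m x) ^ (ε₁ - (d : ℝ)) * v (γ * m x))|)
        ≤ ∫ x, (M * γ ^ (ε₁ - (d : ℝ))) * g₂ x := by
      refine integral_mono hint2.abs hintB fun x => ?_
      have hTmem : γ * m x ∈ Set.Icc (0:ℝ) ε₂ :=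
        ⟨(mul_pos hγ0 (hm0 x)).le, le_trans (mul_le_mul_of_nonneg_left (hmb x) hγ0.le) hγb⟩
      have hvb : |v (γ * m x)| ≤ M := hM _ hTmem
      have hTp : (0:ℝ) ≤ (γ * m x) ^ (ε₁ - (d : ℝ)) :=
        Real.rpow_nonneg (mul_pos hγ0 (hm0 x)).le _
      calc |φ x * ((γ * m x) ^ (ε₁ - (d : ℝ)) * v (γ * m x))|
          = φ x * (γ * m x) ^ (ε₁ - (d : ℝ)) * |v (γ * m x)| := by
            rw [abs_mul, abs_mul, abs_of_nonneg (hφnn x), abs_of_nonneg hTp, mul_assoc]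
        _ ≤ φ x * (γ * m x) ^ (ε₁ - (d : ℝ)) * M := by
            exact mul_le_mul_of_nonneg_left hvb (mul_nonneg (hφnn x) hTp)
        _ = (M * γ ^ (ε₁ - (d : ℝ))) * g₂ x := by
            rw [Real.mul_rpow hγ0.le (hm0 x).le]
            simp only [hg₂_def]; ring
    calc |∫ x, φ x * ((γ * m x) ^ (ε₁ - (d : ℝ)) * v (γ * m x))|
        ≤ ∫ x, (M * γ ^ (ε₁ - (d : ℝ))) * g₂ x := h1.trans h2
      _ = M * γ ^ (ε₁ - (d : ℝ)) * J := MeasureTheory.integral_const_mul _ _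
  -- combine everything
  set A : ℝ := α * γ ^ (-(d : ℝ)) * I with hA_def
  set B : ℝ := ∫ x, φ x * ((γ * m x) ^ (ε₁ - (d : ℝ)) * v (γ * m x)) with hB_def
  have hγd : (0:ℝ) < γ ^ (-(d : ℝ)) := Real.rpow_pos_of_pos hγ0 _
  have hAabs : |A| = |α| * γ ^ (-(d : ℝ)) * I := by
    rw [hA_def, abs_mul, abs_mul, abs_of_pos hγd, abs_of_pos hIpos]
  have hlow : |A| - |B| ≤ |A + B| := by
    have := abs_add_le (A + B) (-B)
    simp only [add_neg_cancel_right, abs_neg] at this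
    linarith
  have hsplit : γ ^ (ε₁ - (d : ℝ)) = γ ^ ε₁ * γ ^ (-(d : ℝ)) := by
    rw [← Real.rpow_add hγ0]; ring_nf
  have hXeq : (M * J + 1) * X = I * |α| / 2 := by
    rw [hX_def]; field_simp
  have hγε : (0:ℝ) ≤ γ ^ ε₁ := Real.rpow_nonneg hγ0.le _
  have hkey : M * γ ^ ε₁ * J ≤ I * |α| / 2 := by
    nlinarith [mul_le_mul_of_nonneg_left hγX (mul_nonneg hMnn hJnn)]
  calc I / 2 * |α| * γ ^ (-(d : ℝ))
      ≤ |α| * γ ^ (-(d : ℝ)) * I - M * γ ^ (ε₁ - (d : ℝ)) * J := by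
        rw [hsplit]; nlinarith
    _ ≤ |A| - |B| := by rw [hAabs]; linarith [hrem]
    _ ≤ |A + B| := hlow
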